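/- arXiv:2411.04074 — 3 statements merged into one kernel-verified Lean document; each statement's English description precedes it below -/
import Mathlib

section
/- Let Ψ : [0,1] → R be continuous, C^4 on (0,1], nonnegative, with Ψ'' ≥ Θ > 0 on (0,1), Ψ'(s) → −∞ as s → 0^+, and assume there exist c_Ψ > 0 and ε_1 ∈ (0,1) with Ψ'''(s) ≤ 0 and Ψ''''(s) ≥ c_Ψ for all s ∈ (0, ε_1). For δ ∈ (0,1), define Ψ_δ(s) = Ψ(s) for s ≥ δ and Ψ_δ(s) = ∑_{i=0}^4 (Ψ^{(i)}(δ)/i!)(s−δ)^i for s < δ. Then there exists C_0 > 0 such that for all sufficiently small δ and all r < δ, Ψ_δ(r) ≥ (c_Ψ/48) r^4 − C_0. -/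
open Set Filter

/-- Lower bound for the fourth-order Taylor regularization `Ψ_δ` of the singular potential `Ψ`
below the cut-off `δ`: there exists `C₀ > 0` such that, for all sufficiently small `δ` and all
`r < δ`, `Ψ_δ(r) ≥ (c_Ψ/48) r⁴ − C₀`.  Here `Ψ1, Ψ2, Ψ3, Ψ4` are the first four derivatives
of `Ψ` on `(0,1]`. -/
theorem stmt_2
    (Ψ Ψ1 Ψ2 Ψ3 Ψ4 : ℝ → ℝ) (Θ cΨ ε1 : ℝ)
    (hΘ : 0 < Θ) (hc : 0 < cΨ) (hε1 : ε1 ∈ Ioo (0 : ℝ) 1)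
    (hcont : ContinuousOn Ψ (Icc 0 1))
    (hd1 : ∀ s ∈ Ioc (0 : ℝ) 1, HasDerivAt Ψ (Ψ1 s) s)
    (hd2 : ∀ s ∈ Ioc (0 : ℝ) 1, HasDerivAt Ψ1 (Ψ2 s) s)
    (hd3 : ∀ s ∈ Ioc (0 : ℝ) 1, HasDerivAt Ψ2 (Ψ3 s) s)
    (hd4 : ∀ s ∈ Ioc (0 : ℝ) 1, HasDerivAt Ψ3 (Ψ4 s) s)
    (hpos : ∀ s ∈ Icc (0 : ℝ) 1, 0 ≤ Ψ s)
    (hconv : ∀ s ∈ Ioo (0 : ℝ) 1, Θ ≤ Ψ2 s)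
    (hblow : Tendsto Ψ1 (nhdsWithin 0 (Ioi 0)) atBot)
    (h34 : ∀ s ∈ Ioo 0 ε1, Ψ3 s ≤ 0 ∧ cΨ ≤ Ψ4 s) :
    ∃ C0 > (0 : ℝ), ∃ δ0 > (0 : ℝ), ∀ δ, 0 < δ → δ < δ0 → ∀ r < δ,
      cΨ / 48 * r ^ 4 - C0 ≤
        Ψ δ + Ψ1 δ * (r - δ) + Ψ2 δ / 2 * (r - δ) ^ 2
          + Ψ3 δ / 6 * (r - δ) ^ 3 + Ψ4 δ / 24 * (r - δ) ^ 4 := by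
  have h := hblow.eventually (eventually_le_atBot (0 : ℝ))
  rw [eventually_nhdsWithin_iff, Metric.eventually_nhds_iff] at h
  obtain ⟨ε, hε, hball⟩ := h
  refine ⟨cΨ / 48 + 1, by positivity, min ε1 ε, lt_min hε1.1 hε, ?_⟩
  intro δ hδ0 hδ r hr
  have hδε1 : δ < ε1 := lt_of_lt_of_le hδ (min_le_left _ _)
  have hδ1 : δ < 1 := hδε1.trans hε1.2
  have hΨ1 : Ψ1 δ ≤ 0 := by
    apply hball
    · simp [Real.dist_eq, abs_of_pos hδ0]
      exact lt_of_lt_of_le hδ (min_le_right _ _)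
    · exact hδ0
  have hA : 0 ≤ Ψ δ := hpos δ ⟨hδ0.le, hδ1.le⟩
  have hx : r - δ < 0 := by linarith
  have hB : 0 ≤ Ψ1 δ * (r - δ) := by nlinarith
  have hC : 0 ≤ Ψ2 δ / 2 * (r - δ) ^ 2 := by
    have h2 := hconv δ ⟨hδ0, hδ1⟩
    have : 0 ≤ Ψ2 δ := by linarith
    positivity
  have h3 := (h34 δ ⟨hδ0, hδε1⟩).1
  have h4 := (h34 δ ⟨hδ0, hδε1⟩).2
  have hD : 0 ≤ Ψ3 δ / 6 * (r - δ) ^ 3 := by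
    have h3' : (r - δ) ^ 3 ≤ 0 := by nlinarith
    nlinarith
  have hx4 : (0:ℝ) ≤ (r - δ) ^ 4 := by positivity
  have hE : cΨ / 24 * (r - δ) ^ 4 ≤ Ψ4 δ / 24 * (r - δ) ^ 4 := by
    apply mul_le_mul_of_nonneg_right _ hx4
    linarith
  rcases le_or_gt r 0 with hr0 | hr0
  · have hpow : r ^ 4 ≤ (r - δ) ^ 4 := by
      have h1 : (-r) ^ 4 ≤ (δ - r) ^ 4 :=
        pow_le_pow_left₀ (by linarith) (by linarith) 4
      calc r ^ 4 = (-r) ^ 4 := by ring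
        _ ≤ (δ - r) ^ 4 := h1
        _ = (r - δ) ^ 4 := by ring
    nlinarith [mul_le_mul_of_nonneg_left hpow (by positivity : (0:ℝ) ≤ cΨ / 48)]
  · have hpow : r ^ 4 ≤ 1 := by
      apply pow_le_one₀ hr0.le
      linarith
    nlinarith [mul_le_mul_of_nonneg_left hpow (by positivity : (0:ℝ) ≤ cΨ / 48)]
end

section
/- Suppose S is a dynamical system on a complete metric space X with a strict Lyapunov functional E, and suppose the trajectory t ↦ c(t) starting from c_0 satisfies: −(d/dt)H(t) ≥ κ‖∇w(t)‖_{L^2} for a.e. t ≥ t^♯, where H(t) = (E(c(t)) − E_∞)^ρ for some ρ ∈ (0,1/2] and κ > 0, and H(t) ≥ 0 is nonincreasing. Then ∇w ∈ L^1([t^♯,∞); L^2(Ω)), and consequently if ∂_t c is controlled linearly by ∇w in the V*-norm, c(t) converges strongly in V* to a limit c^∞ as t → ∞. -/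
open MeasureTheory Filter Set

/-!
Since `-H'` dominates `κ g` and `H ≥ 0`, the fundamental theorem of calculus bounds
`∫_{t♯}^b g` by `H(t♯) / κ` uniformly in `b`, so `g` is integrable on `[t♯, ∞)`. The primitive
`t ↦ ∫_{t♯}^t g` then converges, hence is Cauchy, and `‖c t - c s‖ ≤ L ∫_s^t g` transfers the
Cauchy property to `c`, which converges because `W` is complete.
-/

section NegDeriv

variable {F F' g : ℝ → ℝ} {a m : ℝ}

theorem integrableOn_Ioc_of_le_neg_deriv (hF : ∀ t, a ≤ t → HasDerivAt F (F' t) t)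
    (hgm : AEStronglyMeasurable g (volume.restrict (Ioi a))) (hg : ∀ t, a ≤ t → 0 ≤ g t)
    (hle : ∀ t, a ≤ t → g t ≤ -F' t) (b : ℝ) : IntegrableOn g (Ioc a b) := by
  have hF'int : IntegrableOn (-F') (Ioc a b) :=
    intervalIntegral.integrableOn_deriv_of_nonneg (g := -F)
      (fun t ht => (hF t ht.1).continuousAt.neg.continuousWithinAt)
      (fun t ht => (hF t ht.1.le).neg) (fun t ht => (hg t ht.1.le).trans (hle t ht.1.le))
  refine hF'int.mono' (hgm.mono_set Ioc_subset_Ioi_self) ?_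
  filter_upwards [ae_restrict_mem measurableSet_Ioc] with t ht
  rw [Real.norm_of_nonneg (hg t ht.1.le)]
  exact hle t ht.1.le

theorem intervalIntegral_le_of_le_neg_deriv (hF : ∀ t, a ≤ t → HasDerivAt F (F' t) t)
    (hFm : ∀ t, a ≤ t → m ≤ F t) (hgm : AEStronglyMeasurable g (volume.restrict (Ioi a)))
    (hg : ∀ t, a ≤ t → 0 ≤ g t) (hle : ∀ t, a ≤ t → g t ≤ -F' t) {b : ℝ} (hab : a ≤ b) :
    ∫ t in a..b, g t ≤ F a - m := by
  have hFTC := intervalIntegral.integral_le_sub_of_hasDeriv_right_of_le (g := -F) hab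
    (fun t ht => (hF t ht.1).continuousAt.neg.continuousWithinAt)
    (fun t ht => (hF t ht.1.le).neg.hasDerivWithinAt)
    ((integrableOn_Icc_iff_integrableOn_Ioc (by simp)).2
      (integrableOn_Ioc_of_le_neg_deriv hF hgm hg hle b))
    (fun t ht => hle t ht.1.le)
  simp only [Pi.neg_apply] at hFTC
  linarith [hFm b hab]

theorem integrableOn_Ici_of_le_neg_deriv (hF : ∀ t, a ≤ t → HasDerivAt F (F' t) t)
    (hFm : ∀ t, a ≤ t → m ≤ F t) (hgm : AEStronglyMeasurable g (volume.restrict (Ioi a)))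
    (hg : ∀ t, a ≤ t → 0 ≤ g t) (hle : ∀ t, a ≤ t → g t ≤ -F' t) :
    IntegrableOn g (Ici a) := by
  rw [integrableOn_Ici_iff_integrableOn_Ioi]
  refine integrableOn_Ioi_of_intervalIntegral_norm_bounded (F a - m) a
    (integrableOn_Ioc_of_le_neg_deriv hF hgm hg hle) tendsto_id ?_
  filter_upwards [eventually_ge_atTop a] with b hab
  calc ∫ t in a..b, ‖g t‖ = ∫ t in a..b, g t :=
        intervalIntegral.integral_congr fun t ht =>
          Real.norm_of_nonneg (hg t (by rw [uIcc_of_le hab] at ht; exact ht.1))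
    _ ≤ F a - m := intervalIntegral_le_of_le_neg_deriv hF hFm hgm hg hle hab

end NegDeriv

theorem cauchySeq_of_dist_le_mul_dist {α β γ : Type*} [PseudoMetricSpace α]
    [PseudoMetricSpace β] [Nonempty γ] [SemilatticeSup γ] {u : γ → α} {v : γ → β} {K : ℝ}
    (hv : CauchySeq v)
    (h : ∀ᶠ p : γ × γ in atTop, dist (u p.1) (u p.2) ≤ K * dist (v p.1) (v p.2)) :
    CauchySeq u := by
  rw [cauchySeq_iff_tendsto_dist_atTop_0] at hv ⊢
  exact squeeze_zero' (Eventually.of_forall fun _ => dist_nonneg) h (by simpa using hv.const_mul K)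

theorem cauchySeq_of_norm_sub_le_integral {W : Type*} [SeminormedAddCommGroup W] {c : ℝ → W}
    {g : ℝ → ℝ} {a L : ℝ} (hg : IntegrableOn g (Ioi a))
    (hc : ∀ s t, a ≤ s → s ≤ t → ‖c t - c s‖ ≤ L * ∫ r in s..t, g r) : CauchySeq c := by
  set G : ℝ → ℝ := fun t => ∫ r in a..t, g r
  have hG : CauchySeq G := (intervalIntegral_tendsto_integral_Ioi a hg tendsto_id).cauchySeq
  have hgi : ∀ t, a ≤ t → IntervalIntegrable g volume a t := fun t ht =>
    (intervalIntegrable_iff_integrableOn_Ioc_of_le ht).2 (hg.mono_set Ioc_subset_Ioi_self)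
  have hdist : ∀ s t, a ≤ s → s ≤ t → dist (c s) (c t) ≤ |L| * dist (G s) (G t) := by
    intro s t hs hst
    rw [dist_comm, dist_eq_norm, dist_comm, Real.dist_eq,
      intervalIntegral.integral_interval_sub_left (hgi t (hs.trans hst)) (hgi s hs), ← abs_mul]
    exact (hc s t hs hst).trans (le_abs_self _)
  refine cauchySeq_of_dist_le_mul_dist (K := |L|) hG ?_
  filter_upwards [eventually_ge_atTop (a, a)] with ⟨s, t⟩ ⟨hs, ht⟩
  rcases le_total s t with hst | hts
  · exact hdist s t hs hst
  · rw [dist_comm, dist_comm (G s)]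
    exact hdist t s ht hts

theorem stmt_18_general {W : Type*} [NormedAddCommGroup W] [CompleteSpace W]
    (E : ℝ → ℝ) (Einf ρ κ L tS : ℝ)
    (hκ : 0 < κ)
    (g : ℝ → ℝ) (hg : ∀ t, 0 ≤ g t) (hgm : Measurable g)
    (hE : ∀ t, tS ≤ t → Einf ≤ E t)
    (H' : ℝ → ℝ)
    (hH : ∀ t, tS ≤ t → HasDerivAt (fun t => (E t - Einf) ^ ρ) (H' t) t)
    (hineq : ∀ t, tS ≤ t → κ * g t ≤ -H' t)
    (c : ℝ → W)
    (hc : ∀ s t : ℝ, tS ≤ s → s ≤ t → ‖c t - c s‖ ≤ L * ∫ r in s..t, g r) :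
    IntegrableOn g (Ici tS) ∧ ∃ cinf : W, Tendsto c atTop (nhds cinf) := by
  have hint : IntegrableOn g (Ici tS) :=
    integrableOn_Ici_of_le_neg_deriv (F := fun t => (E t - Einf) ^ ρ / κ) (m := 0)
      (fun t ht => (hH t ht).div_const κ)
      (fun t ht => div_nonneg (Real.rpow_nonneg (sub_nonneg.2 (hE t ht)) ρ) hκ.le)
      hgm.aestronglyMeasurable (fun t _ => hg t)
      (fun t ht => by rw [← neg_div, le_div_iff₀ hκ, mul_comm]; exact hineq t ht)
  exact ⟨hint, cauchySeq_tendsto_of_complete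
    (cauchySeq_of_norm_sub_le_integral (hint.mono_set Ioi_subset_Ici_self) hc)⟩

/-- The Łojasiewicz–Simon convergence argument (Theorem 2.12): if
`H(t) = (E(c(t)) − E_∞)^ρ` is nonnegative and nonincreasing on `[t♯,∞)` and satisfies the
differential inequality `−H'(t) ≥ κ‖∇w(t)‖_{L²} = κ g(t)`, then `g ∈ L¹([t♯,∞))`; and since
`‖∂_t c‖_{V*}` is controlled linearly by `g` (so that `‖c(t) − c(s)‖_{V*} ≤ L ∫_s^t g`),
the trajectory `c(t)` converges in `V*` to some limit `c^∞` as `t → ∞`. -/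
theorem stmt_18 {W : Type*} [NormedAddCommGroup W] [CompleteSpace W]
    (E : ℝ → ℝ) (Einf ρ κ L tS : ℝ)
    (hρ : ρ ∈ Ioc (0 : ℝ) (1 / 2)) (hκ : 0 < κ) (hL : 0 ≤ L)
    (g : ℝ → ℝ) (hg : ∀ t, 0 ≤ g t) (hgm : Measurable g)
    (hE : ∀ t, tS ≤ t → Einf ≤ E t)
    (hmono : AntitoneOn (fun t => (E t - Einf) ^ ρ) (Ici tS))
    (H' : ℝ → ℝ)
    (hH : ∀ t, tS ≤ t → HasDerivAt (fun t => (E t - Einf) ^ ρ) (H' t) t)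
    (hineq : ∀ t, tS ≤ t → κ * g t ≤ -H' t)
    (c : ℝ → W)
    (hc : ∀ s t : ℝ, tS ≤ s → s ≤ t → ‖c t - c s‖ ≤ L * ∫ r in s..t, g r) :
    IntegrableOn g (Ici tS) ∧ ∃ cinf : W, Tendsto c atTop (nhds cinf) :=
  stmt_18_general E Einf ρ κ L tS hκ g hg hgm hE H' hH hineq c hc
end

section
/- Let Ω ⊂ R^d (d ∈ {2,3}) be bounded Lipschitz and ε : R^2 → R continuous with 0 < ε_* ≤ ε ≤ ε^*. Suppose c^n = (c_A^n, c_B^n) → c = (c_A, c_B) in L^2(Ω;R^2) and a.e., Φ^n, Φ ∈ H_0^1(Ω) satisfy (ε(c^n)(E_0 − ∇Φ^n), ∇Λ)_{L^2} = 0 and (ε(c)(E_0 − ∇Φ), ∇Λ)_{L^2} = 0 for all Λ ∈ H_0^1(Ω), and ∇Φ^n ⇀ ∇Φ weakly in L^2. Then ∇Φ^n → ∇Φ strongly in L^2(Ω;R^d). -/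
/-!
Testing the difference of the two weak formulations with `W = ∇Φⁿ - ∇Φ` gives
`ε_* ‖W‖² ≤ ∫ ε(cⁿ) W·W = ∫ (ε(cⁿ) - ε(c)) (E₀ - ∇Φ)·W ≤ ‖(ε(cⁿ) - ε(c)) (E₀ - ∇Φ)‖ ‖W‖`,
so `ε_* ‖∇Φⁿ - ∇Φ‖ ≤ ‖(ε(cⁿ) - ε(c)) (E₀ - ∇Φ)‖`. The right-hand side tends to `0` by dominated
convergence, because `ε(cⁿ) → ε(c)` a.e. and `ε` is bounded.
-/

open MeasureTheory Filter Topology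
open scoped RealInnerProductSpace

section

variable {α E : Type*} [MeasurableSpace α] {μ : Measure α}

theorem MeasureTheory.MemLp.bdd_smul [NormedAddCommGroup E] [NormedSpace ℝ E]
    {φ : α → ℝ} {f : α → E} {B : ℝ} (hf : MemLp f 2 μ) (hφ : AEStronglyMeasurable φ μ)
    (hB : ∀ᵐ x ∂μ, ‖φ x‖ ≤ B) : MemLp (fun x => φ x • f x) 2 μ :=
  hf.smul (memLp_top_of_bound hφ B hB)

theorem tendsto_integral_norm_smul_sq_of_tendsto_ae_zero [NormedAddCommGroup E]
    [NormedSpace ℝ E] {φ : ℕ → α → ℝ} {B : ℝ} (hφ : ∀ n, AEStronglyMeasurable (φ n) μ)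
    (hB : ∀ n, ∀ᵐ x ∂μ, ‖φ n x‖ ≤ B) (hlim : ∀ᵐ x ∂μ, Tendsto (fun n => φ n x) atTop (𝓝 0))
    {f : α → E} (hf : MemLp f 2 μ) :
    Tendsto (fun n => ∫ x, ‖φ n x • f x‖ ^ 2 ∂μ) atTop (𝓝 0) := by
  have hf_sq : Integrable (fun x => ‖f x‖ ^ 2) μ :=
    (memLp_two_iff_integrable_sq_norm hf.aestronglyMeasurable).1 hf
  have hdom : ∀ n, ∀ᵐ x ∂μ, ‖‖φ n x • f x‖ ^ 2‖ ≤ B ^ 2 * ‖f x‖ ^ 2 := fun n => by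
    filter_upwards [hB n] with x hx
    rw [norm_pow, norm_norm, norm_smul, mul_pow]
    gcongr
  have hpointwise : ∀ᵐ x ∂μ, Tendsto (fun n => ‖φ n x • f x‖ ^ 2) atTop (𝓝 0) := by
    filter_upwards [hlim] with x hx
    simpa using ((hx.smul_const (f x)).norm.pow 2)
  simpa using tendsto_integral_of_dominated_convergence _
    (fun n => ((hf.bdd_smul (hφ n) (hB n)).aestronglyMeasurable.norm.pow 2))
    (hf_sq.const_mul (B ^ 2)) hdom hpointwise

variable [NormedAddCommGroup E] [InnerProductSpace ℝ E]

theorem MeasureTheory.L2.norm_eq_sqrt_integral_norm_sq (f : Lp E 2 μ) :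
    ‖f‖ = √(∫ x, ‖f x‖ ^ 2 ∂μ) := by
  simp_rw [← real_inner_self_eq_norm_sq, ← L2.inner_def, real_inner_self_eq_norm_sq,
    Real.sqrt_sq (norm_nonneg f)]

theorem integral_mul_inner_le {φ : α → ℝ} {f : α → E}
    (hφf : MemLp (fun x => φ x • f x) 2 μ) (W : Lp E 2 μ) :
    ∫ x, φ x * ⟪f x, W x⟫ ∂μ ≤ √(∫ x, ‖φ x • f x‖ ^ 2 ∂μ) * ‖W‖ := by
  set H := hφf.toLp _
  have hH : ∫ x, φ x * ⟪f x, W x⟫ ∂μ = ⟪H, W⟫ := by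
    rw [L2.inner_def]
    refine integral_congr_ae ?_
    filter_upwards [hφf.coeFn_toLp] with x hx
    rw [hx, real_inner_smul_left]
  have hHnorm : ‖H‖ = √(∫ x, ‖φ x • f x‖ ^ 2 ∂μ) := by
    rw [L2.norm_eq_sqrt_integral_norm_sq]
    congr 1
    refine integral_congr_ae ?_
    filter_upwards [hφf.coeFn_toLp] with x hx
    rw [hx]
  rw [hH, ← hHnorm]
  exact real_inner_le_norm H W

theorem integrable_mul_inner_sub {φ : α → ℝ} {B : ℝ} (hφ : AEStronglyMeasurable φ μ)
    (hB : ∀ᵐ x ∂μ, ‖φ x‖ ≤ B) (f g h : Lp E 2 μ) :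
    Integrable (fun x => φ x * ⟪f x - g x, h x⟫) μ := by
  refine (((L2.integrable_inner f h).bdd_mul hφ hB).sub
    ((L2.integrable_inner g h).bdd_mul hφ hB)).congr (Eventually.of_forall fun x => ?_)
  simp only [Pi.sub_apply, inner_sub_left, mul_sub]

theorem integral_mul_inner_sub_eq_of_weak {a b : α → ℝ} {B : ℝ}
    (ha : AEStronglyMeasurable a μ) (hb : AEStronglyMeasurable b μ)
    (haB : ∀ᵐ x ∂μ, ‖a x‖ ≤ B) (hbB : ∀ᵐ x ∂μ, ‖b x‖ ≤ B) {E₀ F G W : Lp E 2 μ}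
    (hF : ∫ x, a x * ⟪E₀ x - F x, W x⟫ ∂μ = 0) (hG : ∫ x, b x * ⟪E₀ x - G x, W x⟫ ∂μ = 0) :
    ∫ x, a x * ⟪F x - G x, W x⟫ ∂μ = ∫ x, (a x - b x) * ⟪E₀ x - G x, W x⟫ ∂μ := by
  have hsplit : (fun x => (a x - b x) * ⟪E₀ x - G x, W x⟫) = fun x =>
      (a x * ⟪E₀ x - F x, W x⟫ - b x * ⟪E₀ x - G x, W x⟫) + a x * ⟪F x - G x, W x⟫ := by
    funext x
    simp only [inner_sub_left]
    ring
  have haF := integrable_mul_inner_sub ha haB E₀ F W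
  have hbG := integrable_mul_inner_sub hb hbB E₀ G W
  have hdiff : Integrable
      (fun x => a x * ⟪E₀ x - F x, W x⟫ - b x * ⟪E₀ x - G x, W x⟫) μ := haF.sub hbG
  rw [hsplit, integral_add hdiff (integrable_mul_inner_sub ha haB F G W),
    integral_sub haF hbG, hF, hG, sub_zero, zero_add]

theorem mul_norm_sub_le_of_weak {a b : α → ℝ} {m B : ℝ}
    (ha : AEStronglyMeasurable a μ) (hb : AEStronglyMeasurable b μ) (ham : ∀ᵐ x ∂μ, m ≤ a x)
    (haB : ∀ᵐ x ∂μ, ‖a x‖ ≤ B) (hbB : ∀ᵐ x ∂μ, ‖b x‖ ≤ B) {𝒢 : Submodule ℝ (Lp E 2 μ)}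
    {E₀ F G : Lp E 2 μ} (hF : F ∈ 𝒢) (hG : G ∈ 𝒢)
    (hFweak : ∀ W ∈ 𝒢, ∫ x, a x * ⟪E₀ x - F x, W x⟫ ∂μ = 0)
    (hGweak : ∀ W ∈ 𝒢, ∫ x, b x * ⟪E₀ x - G x, W x⟫ ∂μ = 0) :
    m * ‖F - G‖ ≤ √(∫ x, ‖(a x - b x) • (E₀ x - G x)‖ ^ 2 ∂μ) := by
  set W := F - G
  have hW : W ∈ 𝒢 := 𝒢.sub_mem hF hG
  have hlower : m * ‖W‖ ^ 2 ≤ ∫ x, a x * ⟪F x - G x, W x⟫ ∂μ := by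
    rw [← real_inner_self_eq_norm_sq, L2.inner_def, ← integral_const_mul]
    refine integral_mono_ae ((L2.integrable_inner W W).const_mul m)
      (integrable_mul_inner_sub ha haB F G W) ?_
    filter_upwards [Lp.coeFn_sub F G, ham] with x hx hmx
    rw [← Pi.sub_apply, ← hx]
    exact mul_le_mul_of_nonneg_right hmx real_inner_self_nonneg
  have hab : ∀ᵐ x ∂μ, ‖a x - b x‖ ≤ B + B := by
    filter_upwards [haB, hbB] with x hax hbx
    exact (norm_sub_le _ _).trans (add_le_add hax hbx)
  have hupper : ∫ x, a x * ⟪F x - G x, W x⟫ ∂μ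
      ≤ √(∫ x, ‖(a x - b x) • (E₀ x - G x)‖ ^ 2 ∂μ) * ‖W‖ := by
    rw [integral_mul_inner_sub_eq_of_weak ha hb haB hbB (hFweak W hW) (hGweak W hW)]
    exact integral_mul_inner_le (((Lp.memLp E₀).sub (Lp.memLp G)).bdd_smul (ha.sub hb) hab) W
  rcases (norm_nonneg W).eq_or_lt with hW0 | hWpos
  · rw [← hW0, mul_zero]
    exact Real.sqrt_nonneg _
  · refine le_of_mul_le_mul_right ?_ hWpos
    simpa only [sq, mul_assoc] using hlower.trans hupper

end

theorem stmt_19_general {d : ℕ}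
    (μ : Measure (EuclideanSpace ℝ (Fin d)))
    (ε : EuclideanSpace ℝ (Fin 2) → ℝ) (hεc : Continuous ε)
    (εstar εStar : ℝ) (h0 : 0 < εstar)
    (hεb : ∀ s, εstar ≤ ε s ∧ ε s ≤ εStar)
    (cn : ℕ → EuclideanSpace ℝ (Fin d) → EuclideanSpace ℝ (Fin 2))
    (c : EuclideanSpace ℝ (Fin d) → EuclideanSpace ℝ (Fin 2))
    (hcnm : ∀ n, Measurable (cn n)) (hcm : Measurable c)
    (hae : ∀ᵐ x ∂μ, Tendsto (fun n => cn n x) atTop (nhds (c x)))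
    (𝒢 : Submodule ℝ (Lp (EuclideanSpace ℝ (Fin d)) 2 μ))
    (E0 : Lp (EuclideanSpace ℝ (Fin d)) 2 μ)
    (Gn : ℕ → Lp (EuclideanSpace ℝ (Fin d)) 2 μ) (G : Lp (EuclideanSpace ℝ (Fin d)) 2 μ)
    (hGn : ∀ n, Gn n ∈ 𝒢) (hG : G ∈ 𝒢)
    (hweakn : ∀ n, ∀ W ∈ 𝒢, ∫ x, ε (cn n x) * ⟪E0 x - Gn n x, W x⟫ ∂μ = 0)
    (hweak : ∀ W ∈ 𝒢, ∫ x, ε (c x) * ⟪E0 x - G x, W x⟫ ∂μ = 0) :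
    Tendsto (fun n => ‖Gn n - G‖) atTop (nhds 0) := by
  have hεB : ∀ s, ‖ε s‖ ≤ εStar := fun s => by
    rw [Real.norm_eq_abs, abs_le]
    constructor <;> linarith [hεb s]
  have hεcn : ∀ n, AEStronglyMeasurable (fun x => ε (cn n x)) μ :=
    fun n => (hεc.measurable.comp (hcnm n)).aestronglyMeasurable
  have hεc' : AEStronglyMeasurable (fun x => ε (c x)) μ :=
    (hεc.measurable.comp hcm).aestronglyMeasurable
  have hestimate : ∀ n, εstar * ‖Gn n - G‖
      ≤ √(∫ x, ‖(ε (cn n x) - ε (c x)) • (E0 x - G x)‖ ^ 2 ∂μ) := fun n =>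
    mul_norm_sub_le_of_weak (hεcn n) hεc' (ae_of_all _ fun x => (hεb _).1)
      (ae_of_all _ fun x => hεB _) (ae_of_all _ fun x => hεB _) (hGn n) hG (hweakn n) hweak
  have hperturbation : Tendsto (fun n => ∫ x, ‖(ε (cn n x) - ε (c x)) • (E0 x - G x)‖ ^ 2 ∂μ)
      atTop (𝓝 0) := by
    refine tendsto_integral_norm_smul_sq_of_tendsto_ae_zero (fun n => (hεcn n).sub hεc')
      (fun n => ae_of_all _ fun x => (norm_sub_le _ _).trans (add_le_add (hεB _) (hεB _)))
      ?_ ((Lp.memLp E0).sub (Lp.memLp G))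
    filter_upwards [hae] with x hx
    simpa using ((hεc.tendsto _).comp hx).sub_const (ε (c x))
  refine squeeze_zero (fun n => norm_nonneg _) (fun n => (le_div_iff₀' h0).2 (hestimate n)) ?_
  simpa using ((Real.continuous_sqrt.tendsto 0).comp hperturbation).div_const εstar

/-- Step (vii) of Proposition 3.11: strong `L²` convergence of the electric fields.
`H₀¹(Ω)` is identified with the closed subspace `𝒢` of gradients in `L²(Ω;ℝ^d)`, so
`Gₙ = ∇Φⁿ, G = ∇Φ ∈ 𝒢`.  If `cⁿ → c` in `L²` and a.e., the weak Maxwell formulations hold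
for `(cⁿ, Φⁿ)` and `(c, Φ)`, and `∇Φⁿ ⇀ ∇Φ` weakly in `L²`, then `∇Φⁿ → ∇Φ` strongly
in `L²(Ω;ℝ^d)`. -/
theorem stmt_19 {d : ℕ} (hd : d = 2 ∨ d = 3)
    (Ω : Set (EuclideanSpace ℝ (Fin d))) (hΩmeas : MeasurableSet Ω)
    (hΩbdd : Bornology.IsBounded Ω)
    (μ : Measure (EuclideanSpace ℝ (Fin d))) (hμ : μ = volume.restrict Ω)
    (ε : EuclideanSpace ℝ (Fin 2) → ℝ) (hεc : Continuous ε)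
    (εstar εStar : ℝ) (h0 : 0 < εstar)
    (hεb : ∀ s, εstar ≤ ε s ∧ ε s ≤ εStar)
    (cn : ℕ → EuclideanSpace ℝ (Fin d) → EuclideanSpace ℝ (Fin 2))
    (c : EuclideanSpace ℝ (Fin d) → EuclideanSpace ℝ (Fin 2))
    (hcnm : ∀ n, Measurable (cn n)) (hcm : Measurable c)
    (hL2 : Tendsto (fun n => ∫ x, ‖cn n x - c x‖ ^ 2 ∂μ) atTop (nhds 0))
    (hae : ∀ᵐ x ∂μ, Tendsto (fun n => cn n x) atTop (nhds (c x)))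
    (𝒢 : Submodule ℝ (Lp (EuclideanSpace ℝ (Fin d)) 2 μ))
    (h𝒢 : IsClosed (𝒢 : Set (Lp (EuclideanSpace ℝ (Fin d)) 2 μ)))
    (E0 : Lp (EuclideanSpace ℝ (Fin d)) 2 μ)
    (Gn : ℕ → Lp (EuclideanSpace ℝ (Fin d)) 2 μ) (G : Lp (EuclideanSpace ℝ (Fin d)) 2 μ)
    (hGn : ∀ n, Gn n ∈ 𝒢) (hG : G ∈ 𝒢)
    (hweakn : ∀ n, ∀ W ∈ 𝒢, ∫ x, ε (cn n x) * ⟪E0 x - Gn n x, W x⟫ ∂μ = 0)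
    (hweak : ∀ W ∈ 𝒢, ∫ x, ε (c x) * ⟪E0 x - G x, W x⟫ ∂μ = 0)
    (hweakconv : ∀ h : Lp (EuclideanSpace ℝ (Fin d)) 2 μ,
      Tendsto (fun n => ∫ x, ⟪Gn n x, h x⟫ ∂μ) atTop (nhds (∫ x, ⟪G x, h x⟫ ∂μ))) :
    Tendsto (fun n => ‖Gn n - G‖) atTop (nhds 0) :=
  stmt_19_general μ ε hεc εstar εStar h0 hεb cn c hcnm hcm hae 𝒢 E0 Gn G hGn hG hweakn hweak
end
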